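/- If the columns of D indexed by the support Λ of a Lasso minimizer α* are linearly independent, then the restriction α*_Λ satisfies the closed-form equation α*_Λ = (D_Λ^T D_Λ)^{-1} (D_Λ^T x − (λ/2) sign(α*_Λ)), where sign is applied coordinatewise. -/

import Mathlib

/-!
At a coordinate `j` of the support, `t ↦ F (α* + t eⱼ)` (with `F` the Lasso objective) is
minimal at `0` and differentiable there, because `|α*ⱼ + t|` is smooth near `t = 0` when
`α*ⱼ ≠ 0`. Its derivative `-2 (Dᵀ (x - D α*))ⱼ + λ sign α*ⱼ` therefore vanishes. As `α*`
vanishes off `Λ`, `D α* = D_Λ α*_Λ`, so these are the normal equations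
`D_Λᵀ D_Λ α*_Λ = D_Λᵀ x - (λ/2) sign α*_Λ`, and `D_Λᵀ D_Λ` is positive definite because the
columns of `D_Λ` are linearly independent.
-/

open Finset

noncomputable def normSq {m : ℕ} (x : Fin m → ℝ) : ℝ := ∑ i, (x i) ^ 2
noncomputable def normL1 {k : ℕ} (α : Fin k → ℝ) : ℝ := ∑ j, |α j|

open Matrix

lemma normSq_eq_dotProduct {m : ℕ} (y : Fin m → ℝ) : normSq y = y ⬝ᵥ y := by
  simp only [normSq, dotProduct, sq]

lemma normL1_add_single {k : ℕ} (α : Fin k → ℝ) (j : Fin k) (t : ℝ) :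
    normL1 (α + Pi.single j t) = normL1 α + (|α j + t| - |α j|) := by
  rw [← sub_eq_iff_eq_add', normL1, normL1, ← Finset.sum_sub_distrib,
    Fintype.sum_eq_single j fun l hl => by simp [hl]]
  simp

lemma hasDerivAt_normSq_sub_smul {m : ℕ} (r w : Fin m → ℝ) :
    HasDerivAt (fun t : ℝ => normSq (r - t • w)) (-2 * (w ⬝ᵥ r)) 0 := by
  have hexpand : ∀ t : ℝ,
      normSq (r - t • w) = r ⬝ᵥ r - 2 * (w ⬝ᵥ r) * t + (w ⬝ᵥ w) * t ^ 2 := by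
    intro t
    simp only [normSq_eq_dotProduct, sub_dotProduct, dotProduct_sub, smul_dotProduct,
      dotProduct_smul, dotProduct_comm r w, smul_eq_mul]
    ring
  simp_rw [hexpand]
  simpa using (((hasDerivAt_id' (0 : ℝ)).const_mul (2 * (w ⬝ᵥ r))).const_sub (r ⬝ᵥ r)).fun_add
    ((hasDerivAt_pow 2 (0 : ℝ)).const_mul (w ⬝ᵥ w))

lemma hasDerivAt_abs_const_add {a : ℝ} (ha : a ≠ 0) :
    HasDerivAt (fun t => |a + t|) (Real.sign a) 0 := by
  have h := (hasDerivAt_abs (by simpa using ha : a + 0 ≠ 0)).comp_const_add a 0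
  rcases ha.lt_or_gt with hneg | hpos
  · simpa [Real.sign_of_neg hneg, hneg] using h
  · simpa [Real.sign_of_pos hpos, hpos] using h

lemma submatrix_val_mulVec {m n : Type*} [Fintype n] {s : Finset n} (D : Matrix m n ℝ)
    (α : n → ℝ) (hα : ∀ j ∉ s, α j = 0) :
    D.submatrix id ((↑) : s → n) *ᵥ (fun j => α j) = D *ᵥ α := by
  ext i
  simp only [mulVec, dotProduct, submatrix_apply, id]
  rw [Finset.sum_coe_sort s (fun j => D i j * α j)]
  exact Finset.sum_subset (Finset.subset_univ s) fun j _ hj => by simp [hα j hj]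

noncomputable def lassoObjective {m k : ℕ} (D : Matrix (Fin m) (Fin k) ℝ) (x : Fin m → ℝ)
    (lam : ℝ) (α : Fin k → ℝ) : ℝ :=
  normSq (x - D *ᵥ α) + lam * normL1 α

lemma lassoObjective_add_single {m k : ℕ} (D : Matrix (Fin m) (Fin k) ℝ) (x : Fin m → ℝ)
    (lam : ℝ) (α : Fin k → ℝ) (j : Fin k) (t : ℝ) :
    lassoObjective D x lam (α + Pi.single j t) =
      normSq ((x - D *ᵥ α) - t • D.col j) + lam * (normL1 α + (|α j + t| - |α j|)) := by
  rw [lassoObjective, normL1_add_single, mulVec_add, mulVec_single, op_smul_eq_smul,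
    sub_add_eq_sub_sub]

theorem lassoObjective_stationary {m k : ℕ} (D : Matrix (Fin m) (Fin k) ℝ) (x : Fin m → ℝ)
    (lam : ℝ) (α : Fin k → ℝ) (hmin : ∀ β, lassoObjective D x lam α ≤ lassoObjective D x lam β)
    {j : Fin k} (hj : α j ≠ 0) :
    (Dᵀ *ᵥ (x - D *ᵥ α)) j = lam / 2 * Real.sign (α j) := by
  have hderiv : HasDerivAt (fun t => lassoObjective D x lam (α + Pi.single j t))
      (-2 * (D.col j ⬝ᵥ (x - D *ᵥ α)) + lam * Real.sign (α j)) 0 := by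
    simp_rw [lassoObjective_add_single]
    exact (hasDerivAt_normSq_sub_smul _ _).add
      ((((hasDerivAt_abs_const_add hj).sub_const _).const_add _).const_mul lam)
  have hlocal : IsLocalMin (fun t => lassoObjective D x lam (α + Pi.single j t)) 0 :=
    Filter.Eventually.of_forall fun t => by simpa using hmin _
  have hzero := hlocal.hasDerivAt_eq_zero hderiv
  change D.col j ⬝ᵥ (x - D *ᵥ α) = _
  linarith

theorem lasso_closed_form_on_support_general {m k : ℕ}
    (D : Matrix (Fin m) (Fin k) ℝ) (x : Fin m → ℝ) (lam : ℝ)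
    (αstar : Fin k → ℝ)
    (hmin : ∀ α : Fin k → ℝ,
      normSq (x - D.mulVec αstar) + lam * normL1 αstar ≤
      normSq (x - D.mulVec α) + lam * normL1 α)
    (Λ : Finset (Fin k)) (hΛ : ∀ j, j ∈ Λ ↔ αstar j ≠ 0)
    (DΛ : Matrix (Fin m) {j // j ∈ Λ} ℝ) (hDΛ : ∀ i j, DΛ i j = D i j.val)
    (hindep : LinearIndependent ℝ (fun j : {j // j ∈ Λ} => fun i => DΛ i j)) :
    (fun j : {j // j ∈ Λ} => αstar j.val) =
      (DΛ.transpose * DΛ)⁻¹.mulVec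
        (DΛ.transpose.mulVec x -
          (lam / 2) • (fun j : {j // j ∈ Λ} => Real.sign (αstar j.val))) := by
  have hsub : DΛ = D.submatrix id (↑) := Matrix.ext hDΛ
  have hgram : (DΛᵀ * DΛ).PosDef := by
    simpa [conjTranspose_eq_transpose_of_trivial] using
      PosDef.conjTranspose_mul_self _ (mulVec_injective_iff.mpr hindep)
  let _ := hgram.isUnit.invertible
  refine (inv_mulVec_eq_vec ?_).symm
  have hsupp : DΛ *ᵥ (fun j : Λ => αstar j) = D *ᵥ αstar :=
    hsub ▸ submatrix_val_mulVec D αstar fun j hj => not_not.mp (mt (hΛ j).mpr hj)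
  have hrow : ∀ y j, (DΛᵀ *ᵥ y) j = (Dᵀ *ᵥ y) j := by
    intro y j
    simp [hsub, mulVec, dotProduct]
  ext j
  have hstat := lassoObjective_stationary D x lam αstar hmin ((hΛ j).mp j.2)
  rw [mulVec_sub, Pi.sub_apply] at hstat
  rw [← mulVec_mulVec, hsupp, Pi.sub_apply, hrow, hrow, Pi.smul_apply, smul_eq_mul]
  linarith

/-- closed form for the Lasso solution on its support.
If the columns of D indexed by the support Λ of a minimizer α* are linearly
independent, then α*_Λ = (D_Λᵀ D_Λ)⁻¹ (D_Λᵀ x − (λ/2) sign(α*_Λ)). -/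
theorem lasso_closed_form_on_support {m k : ℕ}
    (D : Matrix (Fin m) (Fin k) ℝ) (x : Fin m → ℝ) (lam : ℝ) (hlam : 0 < lam)
    (αstar : Fin k → ℝ)
    (hmin : ∀ α : Fin k → ℝ,
      normSq (x - D.mulVec αstar) + lam * normL1 αstar ≤
      normSq (x - D.mulVec α) + lam * normL1 α)
    (Λ : Finset (Fin k)) (hΛ : ∀ j, j ∈ Λ ↔ αstar j ≠ 0)
    (DΛ : Matrix (Fin m) {j // j ∈ Λ} ℝ) (hDΛ : ∀ i j, DΛ i j = D i j.val)
    (hindep : LinearIndependent ℝ (fun j : {j // j ∈ Λ} => fun i => DΛ i j)) :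
    (fun j : {j // j ∈ Λ} => αstar j.val) =
      (DΛ.transpose * DΛ)⁻¹.mulVec
        (DΛ.transpose.mulVec x -
          (lam / 2) • (fun j : {j // j ∈ Λ} => Real.sign (αstar j.val))) :=
  lasso_closed_form_on_support_general D x lam αstar hmin Λ hΛ DΛ hDΛ hindep
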